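/- arXiv:1503.08356 — 7 statements merged into one kernel-verified Lean document; each statement's English description precedes it below -/
import Mathlib

section
/- Let Y ∈ R^{p×n} with columns y₁, …, y_n, let D ∈ R^{p×d}, and let λ₃ > 0. Then the minimum value h(Y, D) := min over U ∈ R^{n×d} of (1/2)·‖U‖_F² + (λ₃/2)·‖D − Y U‖_F² equals (1/2)·Σ_{i=1}^n ‖Dᵀ (λ₃⁻¹·I_p + Y Yᵀ)⁻¹ y_i‖₂² + (1/(2λ₃))·‖(λ₃⁻¹·I_p + Y Yᵀ)⁻¹ D‖_F². -/
open Matrix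

private lemma sumsq_eq_trace {m k : ℕ} (A : Matrix (Fin m) (Fin k) ℝ) :
    ∑ i, ∑ j, (A i j) ^ 2 = Matrix.trace (Aᵀ * A) := by
  rw [Matrix.trace, Finset.sum_comm]
  simp [Matrix.diag, Matrix.mul_apply, sq]

private lemma quad_expand {a b c : ℕ} (Y : Matrix (Fin a) (Fin b) ℝ)
    (D : Matrix (Fin a) (Fin c) ℝ) (l3 : ℝ)
    (U U0 : Matrix (Fin b) (Fin c) ℝ)
    (hstat : U0 = l3 • (Yᵀ * (D - Y * U0))) :
    (1/2) * Matrix.trace (Uᵀ * U) + (l3/2) * Matrix.trace ((D - Y*U)ᵀ * (D - Y*U))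
      = (1/2) * Matrix.trace (U0ᵀ * U0)
        + (l3/2) * Matrix.trace ((D - Y*U0)ᵀ * (D - Y*U0))
        + (1/2) * Matrix.trace ((U - U0)ᵀ * (U - U0))
        + (l3/2) * Matrix.trace ((Y*(U - U0))ᵀ * (Y*(U - U0))) := by
  set V : Matrix (Fin b) (Fin c) ℝ := U - U0 with hV
  set S : Matrix (Fin a) (Fin c) ℝ := D - Y * U0 with hS
  have hU : U = U0 + V := by rw [hV]; abel
  have htr : ∀ (A B : Matrix (Fin b) (Fin c) ℝ),
      Matrix.trace (Bᵀ * A) = Matrix.trace (Aᵀ * B) := fun A B => by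
    rw [← Matrix.trace_transpose (Bᵀ * A), Matrix.transpose_mul, Matrix.transpose_transpose]
  have htr2 : ∀ (A B : Matrix (Fin a) (Fin c) ℝ),
      Matrix.trace (Bᵀ * A) = Matrix.trace (Aᵀ * B) := fun A B => by
    rw [← Matrix.trace_transpose (Bᵀ * A), Matrix.transpose_mul, Matrix.transpose_transpose]
  have e1 : Matrix.trace (Uᵀ * U)
      = Matrix.trace (U0ᵀ * U0) + 2 * Matrix.trace (U0ᵀ * V) + Matrix.trace (Vᵀ * V) := by
    rw [hU]
    simp only [Matrix.transpose_add, Matrix.add_mul, Matrix.mul_add, Matrix.trace_add]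
    rw [htr U0 V]; ring
  have e2 : D - Y * U = S - Y * V := by rw [hU, hS, Matrix.mul_add]; abel
  have e3 : Matrix.trace ((D - Y*U)ᵀ * (D - Y*U))
      = Matrix.trace (Sᵀ * S) - 2 * Matrix.trace (Sᵀ * (Y * V))
        + Matrix.trace ((Y*V)ᵀ * (Y*V)) := by
    rw [e2]
    simp only [Matrix.transpose_sub, Matrix.sub_mul, Matrix.mul_sub, Matrix.trace_sub]
    rw [htr2 (Y * V) S]; ring
  have e4 : Matrix.trace (U0ᵀ * V) = l3 * Matrix.trace (Sᵀ * (Y * V)) := by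
    have : U0ᵀ * V = l3 • (Sᵀ * (Y * V)) := by
      rw [hstat]
      simp only [Matrix.transpose_smul, Matrix.transpose_mul, Matrix.transpose_transpose,
        Matrix.smul_mul, Matrix.mul_assoc]
    rw [this, Matrix.trace_smul, smul_eq_mul]
  rw [e1, e3, e4]; ring

/-- The minimum value `h(Y, D) := min_U (1/2)‖U‖_F² + (λ₃/2)‖D − Y U‖_F²` equals
`(1/2) Σᵢ ‖Dᵀ (λ₃⁻¹ I_p + Y Yᵀ)⁻¹ yᵢ‖₂² + (1/(2λ₃)) ‖(λ₃⁻¹ I_p + Y Yᵀ)⁻¹ D‖_F²`,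
and the minimum is attained. -/
theorem stmt_7 (p n d : ℕ) (Y : Matrix (Fin p) (Fin n) ℝ) (D : Matrix (Fin p) (Fin d) ℝ)
    (l3 : ℝ) (hl3 : 0 < l3)
    (K : Matrix (Fin p) (Fin p) ℝ)
    (hK : K = (l3⁻¹ • (1 : Matrix (Fin p) (Fin p) ℝ) + Y * Yᵀ)⁻¹) :
    IsLeast
      (Set.range fun U : Matrix (Fin n) (Fin d) ℝ =>
        (1 / 2) * ∑ i, ∑ j, (U i j) ^ 2 + (l3 / 2) * ∑ i, ∑ j, ((D - Y * U) i j) ^ 2)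
      ((1 / 2) * ∑ i : Fin n, ∑ j : Fin d, ((Dᵀ *ᵥ (K *ᵥ fun r => Y r i)) j) ^ 2
        + (1 / (2 * l3)) * ∑ i, ∑ j, ((K * D) i j) ^ 2) := by
  set M : Matrix (Fin p) (Fin p) ℝ := l3⁻¹ • (1 : Matrix (Fin p) (Fin p) ℝ) + Y * Yᵀ with hM
  -- M is positive definite, hence invertible
  have hMpd : M.PosDef := by
    have h1 : (l3⁻¹ • (1 : Matrix (Fin p) (Fin p) ℝ)).PosDef := by
      have : l3⁻¹ • (1 : Matrix (Fin p) (Fin p) ℝ)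
          = Matrix.diagonal (fun _ => l3⁻¹) := by
        ext i j
        by_cases h : i = j <;> simp [Matrix.one_apply, h]
      rw [this]
      exact Matrix.PosDef.diagonal (fun _ => by positivity)
    have h2 : (Y * Yᵀ).PosSemidef := by
      have := Matrix.posSemidef_self_mul_conjTranspose Y
      rwa [Matrix.conjTranspose_eq_transpose_of_trivial] at this
    exact h1.add_posSemidef h2
  have hMK : M * K = 1 := by
    rw [hK]
    exact Matrix.mul_nonsing_inv M (Matrix.isUnit_iff_isUnit_det M |>.mp hMpd.isUnit)
  have hKsymm : Kᵀ = K := by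
    rw [hK, Matrix.transpose_nonsing_inv]
    congr 1
    rw [hM]
    simp [Matrix.transpose_add, Matrix.transpose_smul, Matrix.transpose_mul]
  -- the minimizer
  set U0 : Matrix (Fin n) (Fin d) ℝ := Yᵀ * (K * D) with hU0
  have hl3' : l3 ≠ 0 := ne_of_gt hl3
  have hres : D - Y * U0 = l3⁻¹ • (K * D) := by
    rw [hU0]
    have h1 : Y * (Yᵀ * (K * D)) = ((Y * Yᵀ) * K) * D := by
      simp only [Matrix.mul_assoc]
    have h2 : (Y * Yᵀ) * K = 1 - l3⁻¹ • K := by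
      have : (l3⁻¹ • (1 : Matrix (Fin p) (Fin p) ℝ)) * K + (Y * Yᵀ) * K = 1 := by
        rw [← Matrix.add_mul, ← hM, hMK]
      rw [Matrix.smul_mul, Matrix.one_mul] at this
      linear_combination (norm := abel) this
    rw [h1, h2, Matrix.sub_mul, Matrix.one_mul, Matrix.smul_mul]
    abel
  have hstat : U0 = l3 • (Yᵀ * (D - Y * U0)) := by
    rw [hres, Matrix.mul_smul, smul_smul, mul_inv_cancel₀ hl3', one_smul, hU0]
  -- value at the minimizer equals the claimed minimum
  have hval : (1 / 2) * ∑ i : Fin n, ∑ j : Fin d, ((Dᵀ *ᵥ (K *ᵥ fun r => Y r i)) j) ^ 2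
        + (1 / (2 * l3)) * ∑ i, ∑ j, ((K * D) i j) ^ 2
      = (1 / 2) * ∑ i, ∑ j, (U0 i j) ^ 2
        + (l3 / 2) * ∑ i, ∑ j, ((D - Y * U0) i j) ^ 2 := by
    have hterm1 : ∀ (i : Fin n) (j : Fin d),
        (Dᵀ *ᵥ (K *ᵥ fun r => Y r i)) j = U0 i j := by
      intro i j
      rw [hU0]
      simp only [Matrix.mulVec, dotProduct, Matrix.mul_apply,
        Matrix.transpose_apply, Finset.mul_sum, Finset.sum_mul]
      rw [Finset.sum_comm]
      refine Finset.sum_congr rfl fun s _ => Finset.sum_congr rfl fun r _ => ?_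
      have h : K s r = K r s := congrFun (congrFun hKsymm r) s
      rw [← h]; ring
    have hterm2 : ∀ (i : Fin p) (j : Fin d),
        ((D - Y * U0) i j) ^ 2 = l3⁻¹ ^ 2 * ((K * D) i j) ^ 2 := by
      intro i j
      rw [hres]
      simp [Matrix.smul_apply, mul_pow, smul_eq_mul]
    simp only [hterm1, hterm2]
    rw [Finset.mul_sum]
    simp only [← Finset.mul_sum]
    field_simp
  constructor
  · exact ⟨U0, by rw [hval]⟩
  · rintro x ⟨U, rfl⟩
    rw [hval]
    simp only [sumsq_eq_trace]
    rw [quad_expand Y D l3 U U0 hstat]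
    have h1 : 0 ≤ Matrix.trace ((U - U0)ᵀ * (U - U0)) := by
      rw [← sumsq_eq_trace]
      exact Finset.sum_nonneg fun i _ => Finset.sum_nonneg fun j _ => sq_nonneg _
    have h2 : 0 ≤ Matrix.trace ((Y*(U - U0))ᵀ * (Y*(U - U0))) := by
      rw [← sumsq_eq_trace]
      exact Finset.sum_nonneg fun i _ => Finset.sum_nonneg fun j _ => sq_nonneg _
    nlinarith
end

section
/- Let (M_t)_{t≥1} and (W_t)_{t≥1} be sequences in R^{p×d} and let (P_t)_{t≥1} be symmetric positive semidefinite matrices in R^{p×p} with spectral norm ‖I_p − P_t‖ ≤ 1 for all t, satisfying the recursion M_{t+1} = (I_p − P_t) M_t + W_t. Suppose there exist an integer τ ≥ 1 and a constant α₀ ∈ (0, 1] such that for every k ≥ 0 the ordered product (I_p − P_{(k+1)τ})···(I_p − P_{kτ+2})(I_p − P_{kτ+1}) has spectral norm at most 1 − α₀, and suppose there exist constants c₂, c₃ > 0 such that ‖W_t‖ ≤ (c₃/t)·‖M_t‖ + c₂ for all t ≥ 1 (spectral norms). Then the sequence (M_t) is uniformly bounded: there exists a constant C₀ such that ‖M_t‖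 ≤ C₀ for all t ≥ 1. -/
open Matrix
open scoped Matrix.Norms.L2Operator

/-!
Over a block of `τ` steps starting at `s`, the recursion gives
`‖M_{s+τ}‖ ≤ (1 - α₀)‖M_s‖ + ∑_{i<τ} ‖W_{s+i}‖`, and since no single step grows `‖M‖` by more than
the factor `1 + c₃` plus `c₂`, the perturbations over the block are at most
`(τ c₃ (1 + c₃)^τ / s) ‖M_s‖ + O(1)`. Once `s` is large this is at most `(α₀/2)‖M_s‖ + O(1)`, so
the block starts obey the affine contraction `x_{k+1} ≤ (1 - α₀/2) x_k + D` and stay bounded; within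
a block `‖M‖` grows by a bounded factor, and the finitely many early terms are bounded anyway.
-/

open Filter

section Scalar

variable {m w : ℕ → ℝ}

lemma le_pow_mul_add_of_le_mul_add {a b : ℝ} {s : ℕ} (ha : 1 ≤ a) (hb : 0 ≤ b)
    (h : ∀ t ≥ s, m (t + 1) ≤ a * m t + b) (n : ℕ) : m (s + n) ≤ a ^ n * (m s + n * b) := by
  induction n with
  | zero => simp
  | succ n ih =>
    calc m (s + (n + 1)) ≤ a * m (s + n) + b := h (s + n) (Nat.le_add_right s n)
      _ ≤ a * (a ^ n * (m s + n * b)) + a ^ (n + 1) * b :=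
        add_le_add (mul_le_mul_of_nonneg_left ih (by linarith))
          (le_mul_of_one_le_left hb (one_le_pow₀ ha))
      _ = a ^ (n + 1) * (m s + (n + 1 : ℕ) * b) := by push_cast; ring

lemma le_pow_mul_add_of_le_mul_add_of_le {a b : ℝ} {s i n : ℕ} (hm : ∀ t, 0 ≤ m t) (ha : 1 ≤ a)
    (hb : 0 ≤ b) (h : ∀ t ≥ s, m (t + 1) ≤ a * m t + b) (hi : i ≤ n) :
    m (s + i) ≤ a ^ n * (m s + n * b) := by
  refine (le_pow_mul_add_of_le_mul_add ha hb h i).trans ?_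
  have hms := hm s
  gcongr

lemma forall_ge_le_of_le_mul_add {x : ℕ → ℝ} {q D X : ℝ} {K : ℕ} (hq : 0 ≤ q) (hX : q * X + D ≤ X)
    (hK : x K ≤ X) (h : ∀ k ≥ K, x (k + 1) ≤ q * x k + D) : ∀ k ≥ K, x k ≤ X := by
  intro k hk
  induction k, hk using Nat.le_induction with
  | base => exact hK
  | succ k hk ih =>
    calc x (k + 1) ≤ q * x k + D := h k hk
      _ ≤ q * X + D := by gcongr
      _ ≤ X := hX

lemma sum_range_le_of_le_div_mul_add {c₂ c₃ R : ℝ} {s τ : ℕ} (hm : ∀ t, 0 ≤ m t) (hc₃ : 0 ≤ c₃)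
    (hs : 1 ≤ s) (hw : ∀ t ≥ 1, w t ≤ c₃ / t * m t + c₂) (hR : ∀ i < τ, m (s + i) ≤ R) :
    ∑ i ∈ Finset.range τ, w (s + i) ≤ τ * (c₃ / s * R + c₂) := by
  have hs' : (0 : ℝ) < s := by exact_mod_cast hs
  have hterm : ∀ i ∈ Finset.range τ, w (s + i) ≤ c₃ / s * R + c₂ := by
    intro i hi
    have hmi := hm (s + i)
    calc w (s + i) ≤ c₃ / (s + i : ℕ) * m (s + i) + c₂ := hw _ (by omega)
      _ ≤ c₃ / s * R + c₂ := by
        push_cast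
        gcongr
        · linarith
        · exact hR i (Finset.mem_range.mp hi)
  refine (Finset.sum_le_card_nsmul _ _ _ hterm).trans_eq ?_
  rw [Finset.card_range, nsmul_eq_mul]

lemma block_le_half_contraction {τ s : ℕ} {α c₂ c₃ B : ℝ} (hm : ∀ t, 0 ≤ m t) (hc₂ : 0 ≤ c₂)
    (hc₃ : 0 ≤ c₃) (hs : 1 ≤ s) (hw : ∀ t ≥ 1, w t ≤ c₃ / t * m t + c₂)
    (hwithin : ∀ i < τ, m (s + i) ≤ B * (m s + τ * c₂))
    (hblock : m (s + τ) ≤ (1 - α) * m s + ∑ i ∈ Finset.range τ, w (s + i))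
    (hlarge : τ * c₃ * B ≤ α / 2 * s) :
    m (s + τ) ≤ (1 - α / 2) * m s + (α / 2 + 1) * (τ * c₂) := by
  have hsmall : τ * (c₃ / s * B) ≤ α / 2 := by
    rw [show τ * (c₃ / s * B) = τ * c₃ * B / s by ring, div_le_iff₀ (by exact_mod_cast hs)]
    exact hlarge
  have hms : 0 ≤ m s + τ * c₂ := by have := hm s; positivity
  calc m (s + τ) ≤ (1 - α) * m s + τ * (c₃ / s * (B * (m s + τ * c₂)) + c₂) :=
        hblock.trans (by gcongr; exact sum_range_le_of_le_div_mul_add hm hc₃ hs hw hwithin)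
    _ = (1 - α) * m s + τ * (c₃ / s * B) * (m s + τ * c₂) + τ * c₂ := by ring
    _ ≤ (1 - α) * m s + α / 2 * (m s + τ * c₂) + τ * c₂ := by gcongr
    _ = (1 - α / 2) * m s + (α / 2 + 1) * (τ * c₂) := by ring

lemma bddAbove_range_of_eventually_blocks_le {τ K : ℕ} {C : ℝ} (hτ : 1 ≤ τ)
    (h : ∀ k ≥ K, ∀ i < τ, m (k * τ + 1 + i) ≤ C) : BddAbove (Set.range m) := by
  refine IsBoundedUnder.bddAbove_range
    ⟨C, eventually_map.2 (eventually_atTop.2 ⟨K * τ + 1, fun t ht => ?_⟩)⟩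
  have ht' : t = (t - 1) / τ * τ + 1 + (t - 1) % τ := by
    have := Nat.div_add_mod' (t - 1) τ
    omega
  rw [ht']
  exact h _ ((Nat.le_div_iff_mul_le hτ).mpr (by omega)) _ (Nat.mod_lt _ hτ)

theorem bddAbove_range_of_blockwise_contraction {τ : ℕ} {α c₂ c₃ : ℝ} (hm : ∀ t, 0 ≤ m t)
    (hτ : 1 ≤ τ) (hα : 0 < α) (hα₁ : α ≤ 1) (hc₂ : 0 ≤ c₂) (hc₃ : 0 ≤ c₃)
    (hstep : ∀ t ≥ 1, m (t + 1) ≤ m t + w t)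
    (hblock : ∀ k, m (k * τ + 1 + τ) ≤
      (1 - α) * m (k * τ + 1) + ∑ i ∈ Finset.range τ, w (k * τ + 1 + i))
    (hw : ∀ t ≥ 1, w t ≤ c₃ / t * m t + c₂) : BddAbove (Set.range m) := by
  set B := (1 + c₃) ^ τ
  have hgrowth : ∀ t ≥ 1, m (t + 1) ≤ (1 + c₃) * m t + c₂ := by
    intro t ht
    have : c₃ / t * m t ≤ c₃ * m t :=
      mul_le_mul_of_nonneg_right (div_le_self hc₃ (by exact_mod_cast ht)) (hm t)
    linarith [hstep t ht, hw t ht]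
  have hwithin : ∀ s ≥ 1, ∀ i ≤ τ, m (s + i) ≤ B * (m s + τ * c₂) := fun s hs i hi =>
    le_pow_mul_add_of_le_mul_add_of_le hm (by linarith) hc₂
      (fun t ht => hgrowth t (hs.trans ht)) hi
  obtain ⟨K, hK⟩ := exists_nat_ge (2 * τ * c₃ * B / α)
  have hcontract : ∀ k ≥ K, m ((k + 1) * τ + 1) ≤
      (1 - α / 2) * m (k * τ + 1) + (α / 2 + 1) * (τ * c₂) := by
    intro k hk
    have hlarge : τ * c₃ * B ≤ α / 2 * (k * τ + 1 : ℕ) := by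
      have hKk : (K : ℝ) ≤ (k * τ + 1 : ℕ) :=
        Nat.cast_le.mpr (hk.trans ((Nat.le_mul_of_pos_right k hτ).trans (Nat.le_succ _)))
      rw [div_le_iff₀ hα] at hK
      nlinarith
    rw [add_one_mul, add_right_comm]
    exact block_le_half_contraction hm hc₂ hc₃ (Nat.le_add_left 1 _) hw
      (fun i hi => hwithin _ (Nat.le_add_left 1 _) i hi.le) (hblock k) hlarge
  set X := max (m (K * τ + 1)) ((α / 2 + 1) * (τ * c₂) / (α / 2))
  have hX : ∀ k ≥ K, m (k * τ + 1) ≤ X := by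
    refine forall_ge_le_of_le_mul_add (x := fun k => m (k * τ + 1)) (by linarith) ?_
      (le_max_left _ _) hcontract
    have hD : (α / 2 + 1) * (τ * c₂) ≤ X * (α / 2) :=
      (div_le_iff₀ (half_pos hα)).mp (le_max_right _ _)
    linarith
  refine bddAbove_range_of_eventually_blocks_le hτ (K := K) (C := B * (X + τ * c₂))
    fun k hk i hi => (hwithin _ (Nat.le_add_left 1 _) i hi.le).trans ?_
  gcongr
  exact hX k hk

end Scalar

section OrderedProd

variable {M₀ : Type*} [Monoid M₀]

/-- `orderedProd A s n = A (s + n - 1) * ⋯ * A (s + 1) * A s`. -/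
def orderedProd (A : ℕ → M₀) (s n : ℕ) : M₀ :=
  ((List.range n).map fun j => A (s + n - 1 - j)).prod

lemma orderedProd_succ (A : ℕ → M₀) (s n : ℕ) :
    orderedProd A s (n + 1) = A (s + n) * orderedProd A s n := by
  rw [orderedProd, List.range_succ_eq_map, List.map_cons, List.prod_cons, List.map_map]
  congr 2
  refine List.map_congr_left fun j _ => ?_
  simp only [Function.comp_apply]
  congr 1
  omega

end OrderedProd

section Recursion

variable {𝕜 : Type*} [RCLike 𝕜] {l n : Type*} [Fintype l] [DecidableEq l] [Fintype n]
  [DecidableEq n] {A : ℕ → Matrix l l 𝕜} {M W : ℕ → Matrix l n 𝕜} {s : ℕ}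

lemma norm_sub_orderedProd_mul_le (hA : ∀ t ≥ s, ‖A t‖ ≤ 1)
    (hrec : ∀ t ≥ s, M (t + 1) = A t * M t + W t) (k : ℕ) :
    ‖M (s + k) - orderedProd A s k * M s‖ ≤ ∑ i ∈ Finset.range k, ‖W (s + i)‖ := by
  induction k with
  | zero => simp [orderedProd]
  | succ k ih =>
    have hs : s + k ≥ s := Nat.le_add_right s k
    have hdecomp : M (s + (k + 1)) - orderedProd A s (k + 1) * M s =
        A (s + k) * (M (s + k) - orderedProd A s k * M s) + W (s + k) := by
      rw [← add_assoc, hrec _ hs, orderedProd_succ, Matrix.mul_sub, Matrix.mul_assoc]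
      abel
    rw [hdecomp, Finset.sum_range_succ]
    calc _ ≤ ‖A (s + k)‖ * ‖M (s + k) - orderedProd A s k * M s‖ + ‖W (s + k)‖ :=
          (norm_add_le _ _).trans (add_le_add_left (l2_opNorm_mul _ _) _)
      _ ≤ 1 * ∑ i ∈ Finset.range k, ‖W (s + i)‖ + ‖W (s + k)‖ := by
          gcongr
          exact hA _ hs
      _ = _ := by rw [one_mul]

lemma norm_le_orderedProd_mul_add (hA : ∀ t ≥ s, ‖A t‖ ≤ 1)
    (hrec : ∀ t ≥ s, M (t + 1) = A t * M t + W t) (k : ℕ) :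
    ‖M (s + k)‖ ≤ ‖orderedProd A s k‖ * ‖M s‖ + ∑ i ∈ Finset.range k, ‖W (s + i)‖ :=
  (norm_le_insert' _ (orderedProd A s k * M s)).trans <|
    add_le_add (l2_opNorm_mul _ _) (norm_sub_orderedProd_mul_le hA hrec k)

end Recursion

theorem stmt_11_general (p d : ℕ) (M W : ℕ → Matrix (Fin p) (Fin d) ℝ)
    (P : ℕ → Matrix (Fin p) (Fin p) ℝ)
    (hPle : ∀ t, 1 ≤ t → ‖(1 : Matrix (Fin p) (Fin p) ℝ) - P t‖ ≤ 1)
    (hrec : ∀ t, 1 ≤ t → M (t + 1) = ((1 : Matrix (Fin p) (Fin p) ℝ) - P t) * M t + W t)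
    (τ : ℕ) (hτ : 1 ≤ τ) (α₀ : ℝ) (hα₀ : 0 < α₀) (hα₁ : α₀ ≤ 1)
    (hprod : ∀ k : ℕ,
      ‖((List.range τ).map
          (fun j => (1 : Matrix (Fin p) (Fin p) ℝ) - P ((k + 1) * τ - j))).prod‖ ≤ 1 - α₀)
    (c₂ c₃ : ℝ) (hc₂ : 0 < c₂) (hc₃ : 0 < c₃)
    (hW : ∀ t : ℕ, 1 ≤ t → ‖W t‖ ≤ (c₃ / t) * ‖M t‖ + c₂) :
    ∃ C₀ : ℝ, ∀ t : ℕ, 1 ≤ t → ‖M t‖ ≤ C₀ := by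
  have hstep : ∀ t ≥ 1, ‖M (t + 1)‖ ≤ ‖M t‖ + ‖W t‖ := by
    intro t ht
    rw [hrec t ht]
    exact (norm_add_le _ _).trans <| add_le_add_left
      ((l2_opNorm_mul _ _).trans (mul_le_of_le_one_left (norm_nonneg _) (hPle t ht))) _
  have hblock : ∀ k, ‖M (k * τ + 1 + τ)‖ ≤
      (1 - α₀) * ‖M (k * τ + 1)‖ + ∑ i ∈ Finset.range τ, ‖W (k * τ + 1 + i)‖ := by
    intro k
    have hprod' : orderedProd (fun t => 1 - P t) (k * τ + 1) τ =
        ((List.range τ).map fun j => 1 - P ((k + 1) * τ - j)).prod := by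
      refine congrArg _ (List.map_congr_left fun j _ => ?_)
      rw [add_one_mul, add_right_comm, Nat.add_sub_cancel]
    refine (norm_le_orderedProd_mul_add (A := fun t => 1 - P t) (fun t ht => hPle t (by omega))
      (fun t ht => hrec t (by omega)) τ).trans ?_
    gcongr
    exact hprod' ▸ hprod k
  obtain ⟨C, hC⟩ := bddAbove_range_of_blockwise_contraction (m := fun t => ‖M t‖)
    (fun _ => norm_nonneg _) hτ hα₀ hα₁ hc₂.le hc₃.le hstep hblock hW
  exact ⟨C, fun t _ => hC ⟨t, rfl⟩⟩

/-- If `M_{t+1} = (I − P_t) M_t + W_t` with `P_t` symmetric PSD, `‖I − P_t‖ ≤ 1`,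
every block of `τ` consecutive factors contracts by `1 − α₀`, and
`‖W_t‖ ≤ (c₃/t)‖M_t‖ + c₂`, then `(M_t)` is uniformly bounded in spectral norm. -/
theorem stmt_11 (p d : ℕ) (M W : ℕ → Matrix (Fin p) (Fin d) ℝ)
    (P : ℕ → Matrix (Fin p) (Fin p) ℝ)
    (hPpsd : ∀ t, 1 ≤ t → (P t).PosSemidef)
    (hPsymm : ∀ t, 1 ≤ t → (P t).IsSymm)
    (hPle : ∀ t, 1 ≤ t → ‖(1 : Matrix (Fin p) (Fin p) ℝ) - P t‖ ≤ 1)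
    (hrec : ∀ t, 1 ≤ t → M (t + 1) = ((1 : Matrix (Fin p) (Fin p) ℝ) - P t) * M t + W t)
    (τ : ℕ) (hτ : 1 ≤ τ) (α₀ : ℝ) (hα₀ : 0 < α₀) (hα₁ : α₀ ≤ 1)
    (hprod : ∀ k : ℕ,
      ‖((List.range τ).map
          (fun j => (1 : Matrix (Fin p) (Fin p) ℝ) - P ((k + 1) * τ - j))).prod‖ ≤ 1 - α₀)
    (c₂ c₃ : ℝ) (hc₂ : 0 < c₂) (hc₃ : 0 < c₃)
    (hW : ∀ t : ℕ, 1 ≤ t → ‖W t‖ ≤ (c₃ / t) * ‖M t‖ + c₂) :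
    ∃ C₀ : ℝ, ∀ t : ℕ, 1 ≤ t → ‖M t‖ ≤ C₀ :=
  stmt_11_general p d M W P hPle hrec τ hτ α₀ hα₀ hα₁ hprod c₂ c₃ hc₂ hc₃ hW
end

section
/- Let (a_t)_{t≥1} and (b_t)_{t≥1} be sequences of nonnegative real numbers such that Σ_{t=1}^∞ a_t = ∞, Σ_{t=1}^∞ a_t b_t < ∞, and there exists K > 0 with |b_{t+1} − b_t| ≤ K a_t for all t. Then b_t → 0 as t → ∞. -/
/-!
If `b` stayed above `ε` from some point on, then `Σ a_t ≤ ε⁻¹ Σ a_t b_t` on the tail would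
converge; so `b` comes down to `ε / 2` infinitely often. Each excursion of `b` from above `ε`
down to `ε / 2` costs, by the Lipschitz-type bound, `Σ a_t ≥ ε / (2K)` over the excursion,
during which `b_t > ε / 2`, hence a contribution `≥ ε² / (4K)` to `Σ a_t b_t`. Since the tails
of `Σ a_t b_t` tend to zero, late excursions are impossible.
-/

open Filter Finset

namespace StepBoundedSequence

variable {a b : ℕ → ℝ} {K : ℝ}

theorem frequently_le_of_not_summable (ha : ∀ t, 0 ≤ a t) (hdiv : ¬Summable a)
    (hsum : Summable fun t => a t * b t) {ε : ℝ} (hε : 0 < ε) : ∃ᶠ n in atTop, b n ≤ ε := by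
  by_contra hfreq
  have hbig : ∀ᶠ n in atTop, ε < b n := by simpa using hfreq
  refine hdiv <| (hsum.mul_left ε⁻¹).of_norm_bounded_eventually_nat ?_
  filter_upwards [hbig] with n hn
  rw [Real.norm_of_nonneg (ha n), ← div_eq_inv_mul, le_div_iff₀ hε]
  exact mul_le_mul_of_nonneg_left hn.le (ha n)

theorem abs_sub_le_mul_sum_Ico (hdiff : ∀ t, |b (t + 1) - b t| ≤ K * a t) {m n : ℕ}
    (hmn : m ≤ n) : |b m - b n| ≤ K * ∑ t ∈ Ico m n, a t := by
  rw [mul_sum, ← Real.dist_eq]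
  exact dist_le_Ico_sum_of_dist_le hmn fun {k} _ _ => by
    rw [Real.dist_eq, abs_sub_comm]
    exact hdiff k

theorem mul_div_le_sum_Ico_mul_of_descent (ha : ∀ t, 0 ≤ a t) (hK : 0 < K)
    (hdiff : ∀ t, |b (t + 1) - b t| ≤ K * a t) {m n : ℕ} (hmn : m ≤ n) {η : ℝ} (hη : 0 ≤ η)
    (hdrop : η ≤ b m - b n) (habove : ∀ k, m ≤ k → k < n → η ≤ b k) :
    η * (η / K) ≤ ∑ t ∈ Ico m n, a t * b t := by
  have hlength : η / K ≤ ∑ t ∈ Ico m n, a t := by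
    rw [div_le_iff₀' hK]
    exact hdrop.trans ((le_abs_self _).trans (abs_sub_le_mul_sum_Ico hdiff hmn))
  calc η * (η / K) ≤ η * ∑ t ∈ Ico m n, a t := by gcongr
    _ = ∑ t ∈ Ico m n, a t * η := by rw [mul_sum]; simp only [mul_comm]
    _ ≤ ∑ t ∈ Ico m n, a t * b t := by
      refine sum_le_sum fun k hk => mul_le_mul_of_nonneg_left ?_ (ha k)
      obtain ⟨hmk, hkn⟩ := mem_Ico.1 hk
      exact habove k hmk hkn

theorem eventually_lt_of_step_le (ha : ∀ t, 0 ≤ a t) (hdiv : ¬Summable a)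
    (hsum : Summable fun t => a t * b t) (hK : 0 < K)
    (hdiff : ∀ t, |b (t + 1) - b t| ≤ K * a t) {ε : ℝ} (hε : 0 < ε) :
    ∀ᶠ m in atTop, b m < ε := by
  set η := ε / 2 with hη_def
  have hη : 0 < η := half_pos hε
  obtain ⟨N, hN⟩ := Metric.cauchySeq_iff.1 hsum.hasSum.tendsto_sum_nat.cauchySeq
    (η * (η / K)) (by positivity)
  filter_upwards [eventually_ge_atTop N] with m hm
  by_contra! hbm
  have hreturn : ∃ n, m ≤ n ∧ b n ≤ η :=
    frequently_atTop.1 (frequently_le_of_not_summable ha hdiv hsum hη) m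
  obtain ⟨hmn, hbn⟩ := Nat.find_spec hreturn
  have habove : ∀ k, m ≤ k → k < Nat.find hreturn → η ≤ b k := fun k hmk hkn =>
    (not_le.1 fun hk => Nat.find_min hreturn hkn ⟨hmk, hk⟩).le
  have hcost := mul_div_le_sum_Ico_mul_of_descent ha hK hdiff hmn hη.le
    (by linarith [hη_def]) habove
  have htail := hN _ (hm.trans hmn) m hm
  rw [sum_Ico_eq_sub _ hmn] at hcost
  exact htail.not_ge (hcost.trans (le_abs_self _))

end StepBoundedSequence

open StepBoundedSequence in
/-- If `a_t, b_t ≥ 0`, `Σ a_t = ∞`, `Σ a_t b_t < ∞`, and `|b_{t+1} − b_t| ≤ K a_t`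
for some `K > 0`, then `b_t → 0`. -/
theorem stmt_13 (a b : ℕ → ℝ) (ha : ∀ t, 0 ≤ a t) (hb : ∀ t, 0 ≤ b t)
    (hdiv : Tendsto (fun n => ∑ t ∈ Finset.range n, a t) atTop atTop)
    (hsum : Summable fun t => a t * b t)
    (K : ℝ) (hK : 0 < K) (hdiff : ∀ t, |b (t + 1) - b t| ≤ K * a t) :
    Tendsto b atTop (nhds 0) := by
  have hnot : ¬Summable a := (not_summable_iff_tendsto_nat_atTop_of_nonneg ha).2 hdiv
  refine tendsto_order.2 ⟨fun c hc => Eventually.of_forall fun t => hc.trans_le (hb t),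
    fun c hc => eventually_lt_of_step_le ha hnot hsum hK hdiff hc⟩
end

section
/- Let (Ω, 𝓕, P) be a probability space with a filtration (𝓕_t)_{t∈ℕ}, and let (u_t)_{t∈ℕ} be a sequence of nonnegative, integrable real random variables adapted to (𝓕_t). For each t define δ_t : Ω → {0, 1} by δ_t = 1 on the event {E[u_{t+1} − u_t | 𝓕_t] > 0} and δ_t = 0 otherwise. If Σ_{t=1}^∞ E[δ_t·(u_{t+1} − u_t)] < ∞, then (u_t) converges almost surely, and moreover Σ_{t=1}^∞ |E[u_{t+1} − u_t | 𝓕_t]| < ∞ almost surely. -/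
/-! With `g t = E[u (t+1) - u t | ℱ t]`, the hypothesis says `∑ E[(g t)⁺] < ∞`, so
`∑ (g t)⁺ < ∞` almost surely. The martingale part `M n = u n - ∑_{t<n} g t` of the Doob
decomposition is bounded below by `-∑_{t<n} (g t)⁺`, whose expectations stay bounded, so `M` is
bounded in `L¹` and converges almost surely. On such a path `u ≥ 0` gives
`∑_{t<n} (g t)⁻ ≤ sup M + ∑ (g t)⁺`, hence `∑ |g t| < ∞`, and `u n = M n + ∑_{t<n} g t`
converges. -/

open MeasureTheory Filter Finset Topology

section

variable {Ω : Type*} {m0 : MeasurableSpace Ω} {μ : Measure Ω}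

lemma integral_indicator_condExp_pos [IsFiniteMeasure μ] {m : MeasurableSpace Ω} (hm : m ≤ m0)
    {f : Ω → ℝ} (hf : Integrable f μ) :
    ∫ ω, {ω | 0 < μ[f|m] ω}.indicator f ω ∂μ = ∫ ω, (μ[f|m] ω)⁺ ∂μ := by
  have hs : MeasurableSet[m] {ω | 0 < μ[f|m] ω} :=
    measurableSet_lt measurable_const stronglyMeasurable_condExp.measurable
  rw [integral_indicator (hm _ hs), ← setIntegral_condExp hm hf hs, ← integral_indicator (hm _ hs)]
  congr 1 with ω
  by_cases h : 0 < μ[f|m] ω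
  · simp [h, h.le]
  · simp [h, le_of_not_gt h]

lemma ae_summable_of_summable_integral {f : ℕ → Ω → ℝ} (hf₀ : ∀ n ω, 0 ≤ f n ω)
    (hf : ∀ n, Integrable (f n) μ) (hsum : Summable fun n => ∫ ω, f n ω ∂μ) :
    ∀ᵐ ω ∂μ, Summable fun n => f n ω := by
  have hnorm : ∀ n, eLpNorm (f n) 1 μ = ENNReal.ofReal (∫ ω, f n ω ∂μ) := fun n => by
    rw [eLpNorm_one_eq_lintegral_enorm, ← ofReal_integral_norm_eq_lintegral_enorm (hf n)]
    simp only [Real.norm_of_nonneg (hf₀ n _)]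
  have hfin : ∑' n, eLpNorm (f n) 1 μ ≠ ⊤ := by
    simp only [hnorm, ← ENNReal.ofReal_tsum_of_nonneg (fun n => integral_nonneg (hf₀ n)) hsum]
    exact ENNReal.ofReal_ne_top
  filter_upwards [summable_norm_of_tsum_eLpNorm_ne_top le_rfl (fun n => (hf n).1) hfin] with ω hω
  simpa only [Real.norm_of_nonneg (hf₀ _ ω)] using hω

/-- `|x| ≤ x + 2B` whenever `-B ≤ x` and `0 ≤ B`, so a martingale bounded below by `-B` is
bounded in `L¹` as soon as `B` is. -/
lemma Martingale.ae_exists_tendsto_of_neg_le [IsFiniteMeasure μ] {ℱ : Filtration ℕ m0}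
    {f B : ℕ → Ω → ℝ} {C : ℝ} (hf : Martingale f ℱ μ) (hB₀ : ∀ n, 0 ≤ᵐ[μ] B n)
    (hB : ∀ n, Integrable (B n) μ) (hBC : ∀ n, ∫ ω, B n ω ∂μ ≤ C) (hfB : ∀ n, -B n ≤ᵐ[μ] f n) :
    ∀ᵐ ω ∂μ, ∃ c, Tendsto (fun n => f n ω) atTop (𝓝 c) := by
  refine hf.submartingale.exists_ae_tendsto_of_bdd (R := (∫ ω, f 0 ω ∂μ + 2 * C).toNNReal)
    fun n => ?_
  have habs : ∫ ω, |f n ω| ∂μ ≤ ∫ ω, f n ω + 2 * B n ω ∂μ := by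
    refine integral_mono_ae (hf.integrable n).abs ((hf.integrable n).add ((hB n).const_mul 2)) ?_
    filter_upwards [hB₀ n, hfB n] with ω h₀ h
    simp only [Pi.zero_apply, Pi.neg_apply] at h₀ h
    exact abs_le.2 ⟨by linarith, by linarith⟩
  have hmean : ∫ ω, f n ω ∂μ = ∫ ω, f 0 ω ∂μ := by
    simpa only [Measure.restrict_univ] using
      (hf.setIntegral_eq (Nat.zero_le n) MeasurableSet.univ).symm
  rw [eLpNorm_one_eq_lintegral_enorm, ← ofReal_integral_norm_eq_lintegral_enorm (hf.integrable n),
    ENNReal.ofReal, ENNReal.coe_le_coe]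
  refine Real.toNNReal_le_toNNReal ?_
  rw [integral_add (hf.integrable n) ((hB n).const_mul 2), integral_const_mul, hmean] at habs
  simp only [Real.norm_eq_abs]
  linarith [hBC n]

lemma martingalePart_apply (u : ℕ → Ω → ℝ) (ℱ : Filtration ℕ m0) (μ : Measure Ω) (n : ℕ)
    (ω : Ω) :
    martingalePart u ℱ μ n ω = u n ω - ∑ t ∈ range n, μ[u (t + 1) - u t | ℱ t] ω := by
  simp [martingalePart, predictablePart, Finset.sum_apply]

end

lemma summable_abs_and_tendsto_of_tendsto_sub_sum {u g : ℕ → ℝ} {c : ℝ} (hu : ∀ n, 0 ≤ u n)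
    (hg : Summable fun t => (g t)⁺)
    (hlim : Tendsto (fun n => u n - ∑ t ∈ range n, g t) atTop (𝓝 c)) :
    Summable (fun t => |g t|) ∧ ∃ l, Tendsto u atTop (𝓝 l) := by
  obtain ⟨b, hb⟩ := hlim.bddAbove_range
  have hneg : Summable fun t => (g t)⁻ := by
    refine summable_of_sum_range_le (c := b + ∑' t, (g t)⁺) (fun t => negPart_nonneg _) fun n => ?_
    have hsplit : ∑ t ∈ range n, (g t)⁻ = ∑ t ∈ range n, (g t)⁺ - ∑ t ∈ range n, g t := by
      rw [← sum_sub_distrib]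
      exact sum_congr rfl fun t _ => by linarith [posPart_sub_negPart (g t)]
    linarith [hb ⟨n, rfl⟩, hu n, hg.sum_le_tsum (range n) fun t _ => posPart_nonneg (g t)]
  have habs : Summable fun t => |g t| := by
    simpa only [posPart_add_negPart] using hg.add hneg
  refine ⟨habs, c + ∑' t, g t, ?_⟩
  refine (hlim.add habs.of_abs.hasSum.tendsto_sum_nat).congr fun n => ?_
  ring

/-- Quasi-martingale convergence: if `(u_t)` is a nonnegative integrable adapted
process and `Σ_t E[δ_t (u_{t+1} − u_t)] < ∞`, where `δ_t` is the indicator of the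
event `{E[u_{t+1} − u_t | 𝓕_t] > 0}`, then `u_t` converges almost surely and
`Σ_t |E[u_{t+1} − u_t | 𝓕_t]| < ∞` almost surely. -/
theorem stmt_14 {Ω : Type*} {m0 : MeasurableSpace Ω} (μ : Measure Ω)
    [IsProbabilityMeasure μ] (ℱ : Filtration ℕ m0) (u : ℕ → Ω → ℝ)
    (hadapt : Adapted ℱ u)
    (hnonneg : ∀ t ω, 0 ≤ u t ω)
    (hint : ∀ t, Integrable (u t) μ)
    (hsum : Summable fun t =>
      ∫ ω, Set.indicator {ω' | 0 < (μ[u (t + 1) - u t | ℱ t]) ω'}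
        (fun ω' => u (t + 1) ω' - u t ω') ω ∂μ) :
    ∀ᵐ ω ∂μ,
      (∃ l : ℝ, Tendsto (fun t => u t ω) atTop (nhds l)) ∧
      Summable (fun t => |(μ[u (t + 1) - u t | ℱ t]) ω|) := by
  set g : ℕ → Ω → ℝ := fun t => μ[u (t + 1) - u t | ℱ t]
  have hg_int : ∀ t, Integrable (fun ω => (g t ω)⁺) μ := fun _ => integrable_condExp.pos_part
  have hpos : Summable fun t => ∫ ω, (g t ω)⁺ ∂μ :=
    hsum.congr fun t => integral_indicator_condExp_pos (ℱ.le t) ((hint (t + 1)).sub (hint t))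
  have hpos_ae : ∀ᵐ ω ∂μ, Summable fun t => (g t ω)⁺ :=
    ae_summable_of_summable_integral (fun _ _ => posPart_nonneg _) hg_int hpos
  have hconv : ∀ᵐ ω ∂μ, ∃ c, Tendsto (fun n => martingalePart u ℱ μ n ω) atTop (𝓝 c) := by
    refine Martingale.ae_exists_tendsto_of_neg_le
      (martingale_martingalePart hadapt.stronglyAdapted hint)
      (B := fun n ω => ∑ t ∈ range n, (g t ω)⁺) (C := ∑' t, ∫ ω, (g t ω)⁺ ∂μ)
      (fun n => ae_of_all _ fun ω => sum_nonneg fun t _ => posPart_nonneg _)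
      (fun n => integrable_finsetSum _ fun t _ => hg_int t)
      (fun n => ?_) (fun n => ae_of_all _ fun ω => ?_)
    · rw [integral_finsetSum _ fun t _ => hg_int t]
      exact hpos.sum_le_tsum _ fun t _ => integral_nonneg fun _ => posPart_nonneg _
    · simp only [Pi.neg_apply, martingalePart_apply]
      linarith [hnonneg n ω, sum_le_sum fun t (_ : t ∈ range n) => le_posPart (g t ω)]
  filter_upwards [hconv, hpos_ae] with ω ⟨c, hc⟩ hω
  simp only [martingalePart_apply] at hc
  exact (summable_abs_and_tendsto_of_tendsto_sub_sum (hnonneg · ω) hω hc).symm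
end

section
/- Let f : R^p × R^q → R be continuous, suppose that for every x ∈ R^p the function u ↦ f(x, u) is differentiable, and suppose that (x, u) ↦ ∇_u f(x, u) is continuous on R^p × R^q. Let C ⊆ R^p be a nonempty compact set and define the value function v(u) := min over x ∈ C of f(x, u). If for some u₀ ∈ R^q the function x ↦ f(x, u₀) has a unique minimizer x₀ on C, then v is differentiable at u₀ and ∇v(u₀) = ∇_u f(x₀, u₀). -/
/-!
Let `D = ∂ᵤf(x₀, u₀)` and let `y` minimize `f(·, u)` on `C`. Then
`f(y, u) - f(y, u₀) ≤ v u - v u₀ ≤ f(x₀, u) - f(x₀, u₀)`, so it suffices to know that both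
outer differences are `D (u - u₀) + o(‖u - u₀‖)`. Continuity of `∂ᵤf` at `(x₀, u₀)` and the mean
value inequality give this uniformly for `x` in a neighbourhood `U` of `x₀`, and since `x₀` is the
unique minimizer, a compactness argument shows that `y ∈ U` for all `u` close to `u₀`.
-/

open Filter Topology Function

theorem IsMinOn.csInf_image_eq {X : Type*} {g : X → ℝ} {C : Set X} {x : X} (hx : x ∈ C)
    (hmin : IsMinOn g C x) : sInf (g '' C) = g x :=
  (hmin.isGLB hx).csInf_eq ⟨g x, x, hx, rfl⟩

theorem IsCompact.eventually_forall_lt {X E : Type*} [TopologicalSpace X] [TopologicalSpace E]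
    {f : X → E → ℝ} (hf : Continuous (uncurry f)) {K : Set X} (hK : IsCompact K) {x₀ : X}
    {u₀ : E} (hlt : ∀ x ∈ K, f x₀ u₀ < f x u₀) : ∀ᶠ u in 𝓝 u₀, ∀ x ∈ K, f x₀ u < f x u := by
  refine hK.eventually_forall_of_forall_eventually fun x hx => ?_
  have hcont : Continuous fun z : E × X => f z.2 z.1 - f x₀ z.1 :=
    (hf.comp continuous_swap).sub (hf.comp (continuous_const.prodMk continuous_fst))
  filter_upwards [hcont.continuousAt.eventually (lt_mem_nhds (sub_pos.2 (hlt x hx)))]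
    with z hz using sub_pos.1 hz

theorem exists_mem_nhds_eventually_norm_sub_sub_le {X E F : Type*} [TopologicalSpace X]
    [NormedAddCommGroup E] [NormedSpace ℝ E] [NormedAddCommGroup F] [NormedSpace ℝ F]
    {f : X → E → F} (hdiff : ∀ x, Differentiable ℝ (f x)) {x₀ : X} {u₀ : E}
    (hdcont : ContinuousAt (fun xu : X × E => fderiv ℝ (f xu.1) xu.2) (x₀, u₀))
    {ε : ℝ} (hε : 0 < ε) :
    ∃ U ∈ 𝓝 x₀, ∀ᶠ u in 𝓝 u₀, ∀ x ∈ U,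
      ‖f x u - f x u₀ - fderiv ℝ (f x₀) u₀ (u - u₀)‖ ≤ ε * ‖u - u₀‖ := by
  have hnear : ∀ᶠ xu : X × E in 𝓝 x₀ ×ˢ 𝓝 u₀,
      ‖fderiv ℝ (f xu.1) xu.2 - fderiv ℝ (f x₀) u₀‖ ≤ ε := by
    rw [← nhds_prod_eq]
    simpa only [← dist_eq_norm] using hdcont.eventually (Metric.closedBall_mem_nhds _ hε)
  obtain ⟨U, hU, r, hr, hbound⟩ := Metric.eventually_prod_nhds_iff.1 hnear
  refine ⟨{x | U x}, hU, ?_⟩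
  filter_upwards [Metric.ball_mem_nhds u₀ hr] with u hu x hx
  exact (convex_ball u₀ r).norm_image_sub_le_of_norm_fderiv_le'
    (fun ξ _ => (hdiff x).differentiableAt) (fun ξ hξ => hbound hx hξ)
    (Metric.mem_ball_self hr) hu

theorem hasFDerivAt_sInf_image_of_unique_isMinOn {X E : Type*} [TopologicalSpace X]
    [NormedAddCommGroup E] [NormedSpace ℝ E] {f : X → E → ℝ} (hf : Continuous (uncurry f))
    (hdiff : ∀ x, Differentiable ℝ (f x)) {x₀ : X} {u₀ : E}
    (hdcont : ContinuousAt (fun xu : X × E => fderiv ℝ (f xu.1) xu.2) (x₀, u₀))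
    {C : Set X} (hC : IsCompact C) (hx₀ : x₀ ∈ C)
    (hlt : ∀ x ∈ C, x ≠ x₀ → f x₀ u₀ < f x u₀) :
    HasFDerivAt (fun u => sInf ((f · u) '' C)) (fderiv ℝ (f x₀) u₀) u₀ := by
  have hmin₀ : IsMinOn (fun x => f x u₀) C x₀ :=
    isMinOn_iff.2 fun x hx => (eq_or_ne x x₀).elim (fun h => h ▸ le_rfl) fun h => (hlt x hx h).le
  rw [hasFDerivAt_iff_isLittleO, Asymptotics.isLittleO_iff]
  intro ε hε
  obtain ⟨U, hU, hunif⟩ := exists_mem_nhds_eventually_norm_sub_sub_le hdiff hdcont hε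
  have hfar : ∀ᶠ u in 𝓝 u₀, ∀ x ∈ C \ interior U, f x₀ u < f x u :=
    (hC.diff isOpen_interior).eventually_forall_lt hf fun x hx =>
      hlt x hx.1 fun h => hx.2 (h ▸ mem_interior_iff_mem_nhds.2 hU)
  filter_upwards [hunif, hfar] with u hbound hfar_u
  obtain ⟨y, hyC, hymin⟩ :=
    hC.exists_isMinOn (f := (f · u)) ⟨x₀, hx₀⟩ (hf.comp (.prodMk_left u)).continuousOn
  have hyU : y ∈ U := interior_subset <| by
    by_contra hy
    exact (hfar_u y ⟨hyC, hy⟩).not_ge (hymin hx₀)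
  have hupper := hbound x₀ (mem_of_mem_nhds hU)
  have hlower := hbound y hyU
  rw [hymin.csInf_image_eq hyC, hmin₀.csInf_image_eq hx₀]
  rw [Real.norm_eq_abs, abs_le] at hupper hlower ⊢
  have hyu : f y u ≤ f x₀ u := isMinOn_iff.1 hymin x₀ hx₀
  have hx₀u₀ : f x₀ u₀ ≤ f y u₀ := isMinOn_iff.1 hmin₀ y hyC
  constructor <;> linarith

theorem stmt_15_general (p q : ℕ) (f : (Fin p → ℝ) → (Fin q → ℝ) → ℝ)
    (hcont : Continuous fun xu : (Fin p → ℝ) × (Fin q → ℝ) => f xu.1 xu.2)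
    (hdiff : ∀ x, Differentiable ℝ (f x))
    (hdcont : Continuous fun xu : (Fin p → ℝ) × (Fin q → ℝ) => fderiv ℝ (f xu.1) xu.2)
    (C : Set (Fin p → ℝ)) (hCcomp : IsCompact C)
    (v : (Fin q → ℝ) → ℝ)
    (hv : ∀ u, v u = sInf ((fun x => f x u) '' C))
    (u₀ : Fin q → ℝ) (x₀ : Fin p → ℝ) (hx₀ : x₀ ∈ C)
    (hmin : ∀ x ∈ C, f x₀ u₀ ≤ f x u₀)
    (huniq : ∀ x ∈ C, f x u₀ = f x₀ u₀ → x = x₀) :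
    HasFDerivAt v (fderiv ℝ (f x₀) u₀) u₀ := by
  obtain rfl : v = fun u => sInf ((fun x => f x u) '' C) := funext hv
  refine hasFDerivAt_sInf_image_of_unique_isMinOn hcont hdiff hdcont.continuousAt hCcomp hx₀ ?_
  exact fun x hx hne => (hmin x hx).lt_of_ne fun h => hne (huniq x hx h.symm)

/-- Danskin-type theorem: let `f : ℝ^p × ℝ^q → ℝ` be continuous, differentiable in the
second argument with jointly continuous partial derivative, `C ⊆ ℝ^p` nonempty compact,
and `v(u) := min_{x ∈ C} f(x, u)`. If `x₀` is the unique minimizer of `f(·, u₀)` on `C`,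
then `v` is differentiable at `u₀` with derivative `∇_u f(x₀, u₀)`. -/
theorem stmt_15 (p q : ℕ) (f : (Fin p → ℝ) → (Fin q → ℝ) → ℝ)
    (hcont : Continuous fun xu : (Fin p → ℝ) × (Fin q → ℝ) => f xu.1 xu.2)
    (hdiff : ∀ x, Differentiable ℝ (f x))
    (hdcont : Continuous fun xu : (Fin p → ℝ) × (Fin q → ℝ) => fderiv ℝ (f xu.1) xu.2)
    (C : Set (Fin p → ℝ)) (hCcomp : IsCompact C) (hCne : C.Nonempty)
    (v : (Fin q → ℝ) → ℝ)
    (hv : ∀ u, v u = sInf ((fun x => f x u) '' C))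
    (u₀ : Fin q → ℝ) (x₀ : Fin p → ℝ) (hx₀ : x₀ ∈ C)
    (hmin : ∀ x ∈ C, f x₀ u₀ ≤ f x u₀)
    (huniq : ∀ x ∈ C, f x u₀ = f x₀ u₀ → x = x₀) :
    HasFDerivAt v (fderiv ℝ (f x₀) u₀) u₀ :=
  stmt_15_general p q f hcont hdiff hdcont C hCcomp v hv u₀ x₀ hx₀ hmin huniq
end

section
/- Let λ₃ > 0, D ∈ R^{p×d}, y ∈ R^p, M ∈ R^{p×d}, and set u := (‖y‖₂² + 1/λ₃)⁻¹ (D − M)ᵀ y and M' := M + y uᵀ. Then (λ₃/2)·‖D − M'‖_F² = (λ₃/2)·‖D − M‖_F² − (λ₃/2)·‖y‖₂²·‖u‖₂² − ‖u‖₂². Consequently, for any t ≥ 1 and any nonnegative reals s₁, …, s_t (interpreted as s_i = (1/2)·‖u_i‖₂² for earlier iterates), writing s_{t+1} = (1/2)·‖u‖₂², the quantity (1/(t+1))·Σ_{i=1}^{t+1} s_i + (λ₃/(2(t+1)))·‖D − M'‖_F² − (1/t)·Σ_{i=1}^{t} s_i − (λ₃/(2t))·‖D − M‖_F² is at most −(1/(t+1))·((λ₃/2)·‖y‖₂²·‖u‖₂²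 + (1/2)·‖u‖₂²), and in particular is nonpositive. -/
/-!
Because `(D - M)ᵀ y = (‖y‖² + 1/λ₃) u`, the cross term in the expansion of
`‖(D - M) - y uᵀ‖_F²` equals `2 (‖y‖² + 1/λ₃) ‖u‖²`, which gives the descent identity exactly.
For the averaged objective, write `X = Σ sᵢ + (λ₃/2)‖D - M‖_F² ≥ 0`; the identity says the
numerator drops from `X` to `X - G` with `G = (λ₃/2)‖y‖²‖u‖² + ½‖u‖² ≥ 0`, and dividing by the
larger count `t + 1` can only help: `(X - G)/(t + 1) - X/t ≤ -G/(t + 1)`.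
-/

open Matrix

theorem sum_sq_sub_vecMulVec {m n : Type*} [Fintype m] [Fintype n]
    (E : Matrix m n ℝ) (y : m → ℝ) (u : n → ℝ) :
    ∑ i, ∑ j, (E - vecMulVec y u) i j ^ 2 =
      ∑ i, ∑ j, E i j ^ 2 - 2 * ((Eᵀ *ᵥ y) ⬝ᵥ u) + (∑ i, y i ^ 2) * ∑ j, u j ^ 2 := by
  have hcross : (Eᵀ *ᵥ y) ⬝ᵥ u = ∑ i, ∑ j, E i j * y i * u j := by
    simp only [dotProduct, mulVec, transpose_apply, Finset.sum_mul]
    rw [Finset.sum_comm]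
  rw [hcross, Finset.sum_mul_sum, Finset.mul_sum]
  simp only [Finset.mul_sum, ← Finset.sum_sub_distrib, ← Finset.sum_add_distrib]
  refine Finset.sum_congr rfl fun i _ => Finset.sum_congr rfl fun j _ => ?_
  simp only [Matrix.sub_apply, vecMulVec_apply]
  ring

theorem half_mul_sum_sq_sub_vecMulVec_of_mulVec_eq {m n : Type*} [Fintype m] [Fintype n]
    {l : ℝ} (hl : l ≠ 0) (E : Matrix m n ℝ) (y : m → ℝ) (u : n → ℝ)
    (hu : Eᵀ *ᵥ y = (∑ i, y i ^ 2 + 1 / l) • u) :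
    (l / 2) * ∑ i, ∑ j, (E - vecMulVec y u) i j ^ 2 =
      (l / 2) * ∑ i, ∑ j, E i j ^ 2 - (l / 2) * ((∑ i, y i ^ 2) * ∑ j, u j ^ 2)
        - ∑ j, u j ^ 2 := by
  have hcross : (Eᵀ *ᵥ y) ⬝ᵥ u = (∑ i, y i ^ 2 + 1 / l) * ∑ j, u j ^ 2 := by
    rw [hu, smul_dotProduct, smul_eq_mul]
    simp only [dotProduct, sq]
  rw [sum_sq_sub_vecMulVec, hcross]
  field_simp
  ring

theorem div_add_one_sub_div_le {t X : ℝ} (ht : 0 < t) (hX : 0 ≤ X) (δ : ℝ) :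
    (X + δ) / (t + 1) - X / t ≤ δ / (t + 1) := by
  have : X / (t + 1) ≤ X / t := div_le_div_of_nonneg_left hX ht (by linarith)
  rw [add_div]
  linarith

/-- With `u = (‖y‖₂² + 1/λ₃)⁻¹ (D − M)ᵀ y` and `M' = M + y uᵀ`, we have
`(λ₃/2)‖D − M'‖_F² = (λ₃/2)‖D − M‖_F² − (λ₃/2)‖y‖₂²‖u‖₂² − ‖u‖₂²`; consequently for
any `t ≥ 1` and nonnegative `s₁, …, s_t`, writing `s_{t+1} = (1/2)‖u‖₂²`,
`(1/(t+1)) Σᵢ₌₁^{t+1} sᵢ + (λ₃/(2(t+1)))‖D − M'‖² − (1/t) Σᵢ₌₁^t sᵢ − (λ₃/(2t))‖D − M‖²`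
is at most `−(1/(t+1))((λ₃/2)‖y‖²‖u‖² + (1/2)‖u‖²)` and in particular nonpositive. -/
theorem stmt_17 (p d : ℕ) (l3 : ℝ) (hl3 : 0 < l3)
    (D M : Matrix (Fin p) (Fin d) ℝ) (y : Fin p → ℝ)
    (u : Fin d → ℝ) (hu : u = (∑ i, (y i) ^ 2 + 1 / l3)⁻¹ • ((D - M)ᵀ *ᵥ y))
    (M' : Matrix (Fin p) (Fin d) ℝ) (hM' : M' = M + vecMulVec y u) :
    ((l3 / 2) * (∑ i, ∑ j, ((D - M') i j) ^ 2) =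
        (l3 / 2) * (∑ i, ∑ j, ((D - M) i j) ^ 2) -
        (l3 / 2) * ((∑ i, (y i) ^ 2) * ∑ j, (u j) ^ 2) - ∑ j, (u j) ^ 2) ∧
    ∀ t : ℕ, 1 ≤ t → ∀ s : Fin t → ℝ, (∀ i, 0 ≤ s i) →
      ((1 / ((t : ℝ) + 1)) * (∑ i, s i + (1 / 2) * ∑ j, (u j) ^ 2)
          + (l3 / (2 * ((t : ℝ) + 1))) * (∑ i, ∑ j, ((D - M') i j) ^ 2)
          - (1 / (t : ℝ)) * ∑ i, s i
          - (l3 / (2 * (t : ℝ))) * (∑ i, ∑ j, ((D - M) i j) ^ 2) ≤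
        -(1 / ((t : ℝ) + 1)) *
          ((l3 / 2) * ((∑ i, (y i) ^ 2) * ∑ j, (u j) ^ 2) + (1 / 2) * ∑ j, (u j) ^ 2)) ∧
      ((1 / ((t : ℝ) + 1)) * (∑ i, s i + (1 / 2) * ∑ j, (u j) ^ 2)
          + (l3 / (2 * ((t : ℝ) + 1))) * (∑ i, ∑ j, ((D - M') i j) ^ 2)
          - (1 / (t : ℝ)) * ∑ i, s i
          - (l3 / (2 * (t : ℝ))) * (∑ i, ∑ j, ((D - M) i j) ^ 2) ≤ 0) := by
  have hc : 0 < ∑ i, y i ^ 2 + 1 / l3 := by positivity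
  have hDM : (D - M)ᵀ *ᵥ y = (∑ i, y i ^ 2 + 1 / l3) • u := by
    rw [hu, smul_smul, mul_inv_cancel₀ hc.ne', one_smul]
  have hdescent := half_mul_sum_sq_sub_vecMulVec_of_mulVec_eq hl3.ne' (D - M) y u hDM
  rw [sub_sub, ← hM'] at hdescent
  refine ⟨hdescent, fun t ht s hs => ?_⟩
  set G := (l3 / 2) * ((∑ i, y i ^ 2) * ∑ j, u j ^ 2) + (1 / 2) * ∑ j, u j ^ 2
  set X := ∑ i, s i + (l3 / 2) * ∑ i, ∑ j, (D - M) i j ^ 2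
  have htpos : (0 : ℝ) < t := by exact_mod_cast ht
  have hX : 0 ≤ X := by
    have := Finset.sum_nonneg fun i (_ : i ∈ Finset.univ) => hs i
    positivity
  have hbound : (X + -G) / (t + 1) - X / t ≤ -(1 / ((t : ℝ) + 1)) * G :=
    (div_add_one_sub_div_le htpos hX (-G)).trans_eq (by ring)
  have hrewrite : (1 / ((t : ℝ) + 1)) * (∑ i, s i + (1 / 2) * ∑ j, u j ^ 2)
      + (l3 / (2 * ((t : ℝ) + 1))) * (∑ i, ∑ j, ((D - M') i j) ^ 2)
      - (1 / (t : ℝ)) * ∑ i, s i - (l3 / (2 * (t : ℝ))) * ∑ i, ∑ j, (D - M) i j ^ 2 =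
        (X + -G) / (t + 1) - X / t := by
    rw [mul_comm 2, ← div_div]
    linear_combination (1 / ((t : ℝ) + 1)) * hdescent
  rw [hrewrite]
  exact ⟨hbound, hbound.trans (by rw [neg_mul]; exact neg_nonpos.mpr (by positivity))⟩
end

section
/- Let X ∈ R^{n×n} be a matrix of rank at most d, and let ‖X‖_* denote its nuclear norm, i.e., the sum of the singular values of X (equivalently, ‖X‖_* = Σ_i √(μ_i), where μ₁, …, μ_n are the eigenvalues of the positive semidefinite matrix Xᵀ X). Then ‖X‖_* equals the minimum over all pairs U ∈ R^{n×d}, V ∈ R^{n×d} with X = U Vᵀ of (1/2)·(‖U‖_F² + ‖V‖_F²), and this minimum is attained. -/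
open Matrix

/-! Let `qᵢ` be an orthonormal eigenbasis of `XᵀX` with eigenvalues `μᵢ ≥ 0` and put `σᵢ = √μᵢ`.
The vectors `X qᵢ` are orthogonal with `‖X qᵢ‖² = μᵢ`, so for `μᵢ ≠ 0` the vectors
`uᵢ = X qᵢ / σᵢ` are orthonormal and `σᵢ = ⟪uᵢ, X qᵢ⟫`. If `X = U Vᵀ`, then
`σᵢ = ⟪Uᵀ uᵢ, Vᵀ qᵢ⟫ ≤ (‖Uᵀ uᵢ‖² + ‖Vᵀ qᵢ‖²) / 2`, and Bessel's inequality for the families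
`uᵢ` and `qᵢ` bounds the sum by `(‖U‖_F² + ‖V‖_F²) / 2`. Conversely `X = ∑_{μᵢ ≠ 0} (X qᵢ) qᵢᵀ`
has `rank X ≤ d` terms, and balancing each as `(X qᵢ / √σᵢ) (√σᵢ qᵢ)ᵀ` gives factors with
`‖U‖_F² = ‖V‖_F² = ∑ σᵢ`. -/

theorem Fintype.sum_subtype_of_ne {α M : Type*} [Fintype α] [AddCommMonoid M] {p : α → Prop}
    [DecidablePred p] (f : α → M) (hf : ∀ i, f i ≠ 0 → p i) : ∑ i : Subtype p, f i = ∑ i, f i := by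
  rw [← Finset.sum_subtype (Finset.univ.filter p) (by simp) f]
  exact Finset.sum_filter_of_ne fun i _ => hf i

namespace Matrix

variable {m k ι κ : Type*} [Fintype m] [Fintype k] [Fintype ι] [Fintype κ]

section CommSemiring

variable {R : Type*} [CommSemiring R]

theorem sum_sq_eq_trace_mul_transpose (A : Matrix m ι R) :
    ∑ i, ∑ j, A i j ^ 2 = (A * Aᵀ).trace := by
  simp [trace, mul_apply, sq]

theorem exists_mul_transpose_eq_one_of_card_le [DecidableEq ι]
    (h : Fintype.card ι ≤ Fintype.card κ) : ∃ E : Matrix ι κ R, E * Eᵀ = 1 := by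
  classical
  obtain ⟨e⟩ := Function.Embedding.nonempty_of_card_le h
  refine ⟨(1 : Matrix κ κ R).submatrix e id, ?_⟩
  rw [transpose_submatrix, transpose_one, ← submatrix_mul _ _ _ _ _ Function.bijective_id,
    Matrix.one_mul, submatrix_one_embedding]

theorem mul_mul_transpose_mul_of_mul_transpose_eq_one {p q : Type*} [DecidableEq ι]
    {E : Matrix ι κ R} (hE : E * Eᵀ = 1) (C : Matrix p ι R) (D : Matrix q ι R) : C * E * (D * E)ᵀ = C * Dᵀ := by
  rw [transpose_mul, Matrix.mul_assoc, ← Matrix.mul_assoc E, hE, Matrix.one_mul]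

theorem exists_mul_transpose_eq_of_card_le [DecidableEq ι] (A : Matrix m ι R)
    (B : Matrix k ι R) (h : Fintype.card ι ≤ Fintype.card κ) :
    ∃ (U : Matrix m κ R) (V : Matrix k κ R), U * Vᵀ = A * Bᵀ ∧
      ∑ i, ∑ j, U i j ^ 2 = ∑ i, ∑ j, A i j ^ 2 ∧ ∑ i, ∑ j, V i j ^ 2 = ∑ i, ∑ j, B i j ^ 2 := by
  obtain ⟨E, hE⟩ := exists_mul_transpose_eq_one_of_card_le (R := R) h
  refine ⟨A * E, B * E, mul_mul_transpose_mul_of_mul_transpose_eq_one hE A B, ?_, ?_⟩ <;>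
    simp only [sum_sq_eq_trace_mul_transpose, mul_mul_transpose_mul_of_mul_transpose_eq_one hE]

end CommSemiring

theorem dotProduct_le_half_sum_sq {r : Type*} [Fintype r] (a b : r → ℝ) :
    a ⬝ᵥ b ≤ 1 / 2 * (∑ j, a j ^ 2 + ∑ j, b j ^ 2) := by
  rw [← Finset.sum_add_distrib, Finset.mul_sum]
  exact Finset.sum_le_sum fun j _ => by nlinarith [sq_nonneg (a j - b j)]

theorem sum_sq_transpose_mulVec_le {u : ι → EuclideanSpace ℝ m} (hu : Orthonormal ℝ u)
    (U : Matrix m κ ℝ) : ∑ i, ∑ j, (Uᵀ *ᵥ u i) j ^ 2 ≤ ∑ a, ∑ j, U a j ^ 2 := by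
  rw [Finset.sum_comm, Finset.sum_comm (γ := m)]
  refine Finset.sum_le_sum fun j _ => ?_
  have := hu.sum_inner_products_le (WithLp.toLp 2 (Uᵀ j)) (s := Finset.univ)
  simpa [EuclideanSpace.real_norm_sq_eq, mulVec, dotProduct, PiLp.inner_apply, mul_comm]
    using this

theorem sum_dotProduct_mulVec_le_of_eq_mul_transpose {r : Type*} [Fintype r]
    {u : ι → EuclideanSpace ℝ m} {v : ι → EuclideanSpace ℝ k} (hu : Orthonormal ℝ u)
    (hv : Orthonormal ℝ v) {X : Matrix m k ℝ} {U : Matrix m r ℝ} {V : Matrix k r ℝ}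
    (hX : X = U * Vᵀ) :
    ∑ i, u i ⬝ᵥ (X *ᵥ v i) ≤ 1 / 2 * (∑ a, ∑ j, U a j ^ 2 + ∑ b, ∑ j, V b j ^ 2) :=
  calc ∑ i, u i ⬝ᵥ (X *ᵥ v i) = ∑ i, (Uᵀ *ᵥ u i) ⬝ᵥ (Vᵀ *ᵥ v i) := by
        simp only [hX, ← mulVec_mulVec, dotProduct_mulVec _ U, mulVec_transpose]
    _ ≤ ∑ i, 1 / 2 * (∑ j, (Uᵀ *ᵥ u i) j ^ 2 + ∑ j, (Vᵀ *ᵥ v i) j ^ 2) :=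
        Finset.sum_le_sum fun i _ => dotProduct_le_half_sum_sq _ _
    _ ≤ 1 / 2 * (∑ a, ∑ j, U a j ^ 2 + ∑ b, ∑ j, V b j ^ 2) := by
        rw [← Finset.mul_sum, Finset.sum_add_distrib]
        gcongr
        · exact sum_sq_transpose_mulVec_le hu U
        · exact sum_sq_transpose_mulVec_le hv V

end Matrix

namespace Matrix.IsHermitian

variable {m k : Type*} [Fintype m] [Fintype k] [DecidableEq k] {X : Matrix m k ℝ}
  (hA : (Xᵀ * X).IsHermitian)

theorem mulVec_eigenvectorBasis_dotProduct (i j : k) :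
    (X *ᵥ hA.eigenvectorBasis i) ⬝ᵥ (X *ᵥ hA.eigenvectorBasis j) =
      if i = j then hA.eigenvalues i else 0 := by
  have hq := orthonormal_iff_ite.mp hA.eigenvectorBasis.orthonormal i j
  rw [EuclideanSpace.inner_eq_star_dotProduct, star_trivial, dotProduct_comm] at hq
  rw [dotProduct_mulVec, ← mulVec_transpose, mulVec_mulVec, hA.mulVec_eigenvectorBasis,
    smul_dotProduct, hq, smul_eq_mul, mul_ite, mul_one, mul_zero]

theorem eigenvalues_nonneg_of_transpose_mul_self (i : k) : 0 ≤ hA.eigenvalues i :=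
  eigenvalues_conjTranspose_mul_self_nonneg X i

theorem mulVec_eigenvectorBasis_eq_zero {i : k} (h : hA.eigenvalues i = 0) :
    X *ᵥ hA.eigenvectorBasis i = 0 :=
  dotProduct_self_eq_zero.mp (by rw [hA.mulVec_eigenvectorBasis_dotProduct, if_pos rfl, h])

theorem sum_sq_mulVec_eigenvectorBasis (i : k) :
    ∑ a, (X *ᵥ hA.eigenvectorBasis i) a ^ 2 = hA.eigenvalues i := by
  simpa [dotProduct, sq] using hA.mulVec_eigenvectorBasis_dotProduct i i

theorem sum_mulVec_eigenvectorBasis_mul (a : m) (b : k) :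
    ∑ i, (X *ᵥ hA.eigenvectorBasis i) a * hA.eigenvectorBasis i b = X a b := by
  have := hA.eigenvectorBasis.sum_inner_mul_inner (WithLp.toLp 2 (X a))
    (EuclideanSpace.single b 1)
  simpa [PiLp.inner_apply, mulVec, dotProduct, mul_comm] using this

theorem sum_sqrt_eigenvalues_le_of_eq_mul_transpose {r : Type*} [Fintype r] {U : Matrix m r ℝ}
    {V : Matrix k r ℝ} (hX : X = U * Vᵀ) :
    ∑ i, √(hA.eigenvalues i) ≤ 1 / 2 * (∑ a, ∑ j, U a j ^ 2 + ∑ b, ∑ j, V b j ^ 2) := by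
  let u : {i // hA.eigenvalues i ≠ 0} → EuclideanSpace ℝ m := fun i =>
    (√(hA.eigenvalues i))⁻¹ • WithLp.toLp 2 (X *ᵥ hA.eigenvectorBasis i)
  have hu : Orthonormal ℝ u := by
    rw [orthonormal_iff_ite]
    rintro ⟨i, hi⟩ ⟨j, hj⟩
    simp only [u, EuclideanSpace.inner_eq_star_dotProduct, star_trivial, WithLp.ofLp_smul,
      smul_dotProduct, dotProduct_smul, hA.mulVec_eigenvectorBasis_dotProduct, smul_eq_mul]
    by_cases hij : i = j
    · subst hij
      rw [if_pos rfl, if_pos rfl, ← mul_assoc, ← mul_inv,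
        Real.mul_self_sqrt (hA.eigenvalues_nonneg_of_transpose_mul_self i), inv_mul_cancel₀ hi]
    · simp [hij, Ne.symm hij]
  have hσ (i : {i // hA.eigenvalues i ≠ 0}) :
      √(hA.eigenvalues i) = u i ⬝ᵥ (X *ᵥ hA.eigenvectorBasis i) := by
    simp only [u, WithLp.ofLp_smul, smul_dotProduct, hA.mulVec_eigenvectorBasis_dotProduct,
      ↓reduceIte, smul_eq_mul, inv_mul_eq_div, Real.div_sqrt]
  calc ∑ i, √(hA.eigenvalues i) = ∑ i : {i // hA.eigenvalues i ≠ 0}, √(hA.eigenvalues i) :=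
        (Fintype.sum_subtype_of_ne (p := fun i => hA.eigenvalues i ≠ 0) _
          fun i hi h => hi (by rw [h, Real.sqrt_zero])).symm
    _ = ∑ i : {i // hA.eigenvalues i ≠ 0}, u i ⬝ᵥ (X *ᵥ hA.eigenvectorBasis i) :=
        Finset.sum_congr rfl fun i _ => hσ i
    _ ≤ _ := sum_dotProduct_mulVec_le_of_eq_mul_transpose hu
          (hA.eigenvectorBasis.orthonormal.comp _ Subtype.val_injective) hX

theorem exists_eq_mul_transpose_sum_sq_eq_sum_sqrt_eigenvalues {r : Type*} [Fintype r]
    (hr : X.rank ≤ Fintype.card r) :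
    ∃ (U : Matrix m r ℝ) (V : Matrix k r ℝ), X = U * Vᵀ ∧
      1 / 2 * (∑ a, ∑ j, U a j ^ 2 + ∑ b, ∑ j, V b j ^ 2) = ∑ i, √(hA.eigenvalues i) := by
  let σ : k → ℝ := fun i => √(hA.eigenvalues i)
  let U₀ : Matrix m {i // hA.eigenvalues i ≠ 0} ℝ :=
    of fun a i => (X *ᵥ hA.eigenvectorBasis i) a / √(σ i)
  let V₀ : Matrix k {i // hA.eigenvalues i ≠ 0} ℝ :=
    of fun b i => √(σ i) * hA.eigenvectorBasis i b
  have hcard : Fintype.card {i // hA.eigenvalues i ≠ 0} ≤ Fintype.card r := by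
    rwa [← hA.rank_eq_card_non_zero_eigs, rank_transpose_mul_self]
  have hσ0 (i : k) (hi : σ i ≠ 0) : hA.eigenvalues i ≠ 0 := fun h => hi (by simp [σ, h])
  have hσpos (i : {i // hA.eigenvalues i ≠ 0}) : 0 < σ i :=
    Real.sqrt_pos.mpr ((hA.eigenvalues_nonneg_of_transpose_mul_self i).lt_of_ne' i.2)
  have hUV₀ : U₀ * V₀ᵀ = X := by
    ext a b
    have hterm (i : {i // hA.eigenvalues i ≠ 0}) : U₀ a i * V₀ᵀ i b =
        (X *ᵥ hA.eigenvectorBasis i) a * hA.eigenvectorBasis i b := by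
      have := (Real.sqrt_pos.mpr (hσpos i)).ne'
      simp only [U₀, V₀, of_apply, transpose_apply]
      field_simp
    rw [mul_apply, Finset.sum_congr rfl fun i _ => hterm i]
    refine (Fintype.sum_subtype_of_ne (p := fun i => hA.eigenvalues i ≠ 0) _
      fun i hi h => hi ?_).trans (hA.sum_mulVec_eigenvectorBasis_mul a b)
    rw [hA.mulVec_eigenvectorBasis_eq_zero h, Pi.zero_apply, zero_mul]
  have hU₀ : ∑ a, ∑ j, U₀ a j ^ 2 = ∑ i, σ i := by
    rw [Finset.sum_comm, ← Fintype.sum_subtype_of_ne σ hσ0]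
    refine Finset.sum_congr rfl fun i _ => ?_
    simp only [U₀, of_apply, div_pow, ← Finset.sum_div, Real.sq_sqrt (hσpos i).le,
      hA.sum_sq_mulVec_eigenvectorBasis]
    exact Real.div_sqrt
  have hV₀ : ∑ b, ∑ j, V₀ b j ^ 2 = ∑ i, σ i := by
    rw [Finset.sum_comm, ← Fintype.sum_subtype_of_ne σ hσ0]
    refine Finset.sum_congr rfl fun i _ => ?_
    simp only [V₀, of_apply, mul_pow, ← Finset.mul_sum, Real.sq_sqrt (hσpos i).le,
      ← EuclideanSpace.real_norm_sq_eq, hA.eigenvectorBasis.orthonormal.1 i, one_pow, mul_one]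
  obtain ⟨U, V, hUV, hU, hV⟩ := exists_mul_transpose_eq_of_card_le U₀ V₀ hcard
  exact ⟨U, V, by rw [hUV, hUV₀], by rw [hU, hV, hU₀, hV₀]; ring⟩

end Matrix.IsHermitian

/-- For `X ∈ ℝ^{n×n}` of rank at most `d`, the nuclear norm
`‖X‖_* = Σᵢ √(μᵢ)`, where `μᵢ` are the eigenvalues of `Xᵀ X`, equals the minimum of
`(1/2)(‖U‖_F² + ‖V‖_F²)` over all factorizations `X = U Vᵀ` with
`U, V ∈ ℝ^{n×d}`, and the minimum is attained. -/
theorem stmt_19 (n d : ℕ) (X : Matrix (Fin n) (Fin n) ℝ) (hrank : X.rank ≤ d) :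
    IsLeast
      { c : ℝ | ∃ U V : Matrix (Fin n) (Fin d) ℝ, X = U * Vᵀ ∧
          c = (1 / 2) * ((∑ i, ∑ j, (U i j) ^ 2) + (∑ i, ∑ j, (V i j) ^ 2)) }
      (∑ i, Real.sqrt
        ((show (Xᵀ * X).IsHermitian by
            simpa using Matrix.isHermitian_conjTranspose_mul_self X).eigenvalues i)) := by
  have hA : (Xᵀ * X).IsHermitian := isHermitian_conjTranspose_mul_self X
  constructor
  · obtain ⟨U, V, hX, hUV⟩ :=
      hA.exists_eq_mul_transpose_sum_sq_eq_sum_sqrt_eigenvalues (r := Fin d) (by simpa using hrank)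
    exact ⟨U, V, hX, hUV.symm⟩
  · rintro c ⟨U, V, hX, rfl⟩
    exact hA.sum_sqrt_eigenvalues_le_of_eq_mul_transpose hX
end
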